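/- arXiv:math/0504196 — 4 statements merged into one kernel-verified Lean document; each statement's English description precedes it below -/
import Mathlib

section
/- In ZF: let T₁ be the theory of dense linear orders without endpoints with constants c_n satisfying c_n < c_{n+1}, and let p(x) = {c_n < x : n < ω}. If T₁ has a model with universe X in which some element realizes p(x) but no element is the <-least element realizing p(x), then T₁ has a model with universe X in which some element is the <-least element realizing p(x). -/
open FirstOrder Language

/-- The vocabulary of the Ehrenfeucht example: the order symbol together with
constants `c_n` for `n < ω`. -/
abbrev EL : FirstOrder.Language := Language.order[[ℕ]]

instance : IsOrdered EL := ⟨Sum.inl leSymb⟩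

/-- The constant `c_n`, as a closed term. -/
def cT (n : ℕ) : EL.Term (Empty ⊕ Fin 0) := Constants.term (Language.order.con n)

/-- The Ehrenfeucht theory `T₁`: dense linear order without endpoints together with the
axioms `c_n < c_{n+1}` for all `n < ω`. -/
def T1 : EL.Theory :=
  (LHom.sumInl.onTheory Language.order.dlo) ∪
    Set.range (fun n : ℕ => (Term.lt (cT n) (cT (n + 1)) : EL.Sentence))

section
variable {X : Type*}

/-- The interpretation of `≤` in a structure `S` on `X`. -/
def Ele (S : EL.Structure X) (a b : X) : Prop :=
  @Structure.RelMap EL X S 2 (Sum.inl leSymb) ![a, b]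

/-- The interpretation of `<` in a structure `S` on `X`. -/
def Elt (S : EL.Structure X) (a b : X) : Prop := Ele S a b ∧ a ≠ b

/-- The interpretation of the constant `c_n` in a structure `S` on `X`. -/
def Econ (S : EL.Structure X) (n : ℕ) : X :=
  @Structure.funMap EL X S 0 (Language.order.con n) ![]

/-- `a` realizes the type `p(x) = {c_n < x : n < ω}` in the structure `S`. -/
def RealizesP (S : EL.Structure X) (a : X) : Prop := ∀ n : ℕ, Elt S (Econ S n) a

end

/-!
The realizations of `p` form an upper set `P` with no least element, and its complement `Q` is a
lower set with no greatest element, since everything outside `P` lies below some `c_n`. Pick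
`a ∈ P` and reorder the universe as `Q < a < P \ {a}`, keeping the old order inside `Q` and inside
`P \ {a}`; this is the lexicographic sum `Q ⊕ₗ WithBot (P \ {a})`. The constants stay in `Q`, so
the realizations are still the elements of `P`, and `a` is now the least of them. The new order is
still dense without endpoints because `Q` has no greatest and `P \ {a}` no least element. The model
is built on the sum type and carried back to `X` along the bijection.
-/

section Order
universe u
variable {α : Type u} [LinearOrder α]

instance [NoMaxOrder α] {a : α} : NoMaxOrder {b // b ≠ a} :=
  ⟨fun ⟨b, _⟩ =>
    let ⟨d, hd⟩ := exists_gt (max a b)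
    ⟨⟨d, (le_max_left a b).trans_lt hd |>.ne'⟩, (le_max_right a b).trans_lt hd⟩⟩

instance [NoMinOrder α] {a : α} : NoMinOrder {b // b ≠ a} :=
  ⟨fun ⟨b, _⟩ =>
    let ⟨d, hd⟩ := exists_lt (min a b)
    ⟨⟨d, hd.trans_le (min_le_left a b) |>.ne⟩, hd.trans_le (min_le_right a b)⟩⟩

instance [DenselyOrdered α] {a : α} : DenselyOrdered {b // b ≠ a} := by
  refine ⟨fun b d (hbd : b.1 < d.1) => ?_⟩
  obtain ⟨z, hbz, hzd⟩ := exists_between hbd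
  by_cases hza : z = a
  · obtain ⟨w, hbw, hwz⟩ := exists_between hbz
    exact ⟨⟨w, hza ▸ hwz.ne⟩, hbw, hwz.trans hzd⟩
  · exact ⟨⟨z, hza⟩, hbz, hzd⟩

theorem IsUpperSet.noMaxOrder [NoMaxOrder α] {s : Set α} (hs : IsUpperSet s) : NoMaxOrder s :=
  ⟨fun ⟨x, hx⟩ => let ⟨y, hy⟩ := exists_gt x; ⟨⟨y, hs hy.le hx⟩, hy⟩⟩

theorem IsLowerSet.noMinOrder [NoMinOrder α] {s : Set α} (hs : IsLowerSet s) : NoMinOrder s :=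
  ⟨fun ⟨x, hx⟩ => let ⟨y, hy⟩ := exists_lt x; ⟨⟨y, hs hy.le hx⟩, hy⟩⟩

section MoveToBot
variable (s : Set α) [DecidablePred (· ∈ s)] (a : s)

def Set.moveToBot : α ≃ ↥sᶜ ⊕ₗ WithBot {b : s // b ≠ a} :=
  (Equiv.Set.sumCompl s).symm.trans <| (Equiv.sumComm _ _).trans <|
    (Equiv.sumCongr (Equiv.refl _) (Equiv.optionSubtypeNe a).symm).trans toLex

variable {s}

theorem Set.moveToBot_apply_of_notMem {x : α} (hx : x ∉ s) :
    s.moveToBot a x = toLex (Sum.inl ⟨x, hx⟩) := by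
  simp only [Set.moveToBot, Equiv.trans_apply, Equiv.Set.sumCompl_symm_apply_of_notMem hx,
    Equiv.sumComm_apply, Sum.swap_inr]
  rfl

theorem Set.exists_moveToBot_apply_of_mem {x : α} (hx : x ∈ s) :
    ∃ y, s.moveToBot a x = toLex (Sum.inr y) := by
  simp only [Set.moveToBot, Equiv.trans_apply, Equiv.Set.sumCompl_symm_apply_of_mem hx,
    Equiv.sumComm_apply, Sum.swap_inl]
  exact ⟨_, rfl⟩

theorem Set.moveToBot_apply_self : s.moveToBot a a = toLex (Sum.inr ⊥) := by
  simp only [Set.moveToBot, Equiv.trans_apply, Equiv.Set.sumCompl_symm_apply_of_mem a.2,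
    Equiv.sumComm_apply, Sum.swap_inl]
  show toLex (Sum.inr ((Equiv.optionSubtypeNe a).symm a)) = _
  rw [Equiv.optionSubtypeNe_symm_apply, dif_pos rfl]
  rfl

theorem Set.strictMonoOn_moveToBot : StrictMonoOn (s.moveToBot a) sᶜ := by
  intro x hx y hy hxy
  rw [Set.moveToBot_apply_of_notMem a hx, Set.moveToBot_apply_of_notMem a hy]
  exact Sum.Lex.inl_lt_inl_iff.2 hxy

theorem Set.moveToBot_lt_of_notMem_of_mem {x y : α} (hx : x ∉ s) (hy : y ∈ s) :
    s.moveToBot a x < s.moveToBot a y := by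
  obtain ⟨z, hz⟩ := Set.exists_moveToBot_apply_of_mem a hy
  rw [Set.moveToBot_apply_of_notMem a hx, hz]
  exact Sum.Lex.inl_lt_inr _ _

theorem Set.isLeast_moveToBot_image : IsLeast (s.moveToBot a '' s) (s.moveToBot a a) := by
  refine ⟨Set.mem_image_of_mem _ a.2, ?_⟩
  rintro _ ⟨y, hy, rfl⟩
  obtain ⟨z, hz⟩ := Set.exists_moveToBot_apply_of_mem a hy
  rw [Set.moveToBot_apply_self, hz]
  exact Sum.Lex.inr_le_inr_iff.2 bot_le

end MoveToBot

variable [DenselyOrdered α] [NoMinOrder α] [NoMaxOrder α]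

theorem IsUpperSet.exists_equiv_dlo_isLeast_image {s : Set α} (hs : IsUpperSet s)
    (hsmin : ∀ x ∈ s, ∃ y ∈ s, y < x) (hsmax : ∀ x ∉ s, ∃ y ∉ s, x < y) (hne : sᶜ.Nonempty)
    {a : α} (ha : a ∈ s) :
    ∃ (β : Type u) (_ : LinearOrder β) (_ : DenselyOrdered β) (_ : NoMinOrder β)
      (_ : NoMaxOrder β) (e : α ≃ β), StrictMonoOn e sᶜ ∧ (∀ x ∉ s, ∀ y ∈ s, e x < e y) ∧
      IsLeast (e '' s) (e a) := by
  classical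
  have : NoMaxOrder s := hs.noMaxOrder
  have : NoMinOrder s := ⟨fun x => let ⟨y, hy, hyx⟩ := hsmin x x.2; ⟨⟨y, hy⟩, hyx⟩⟩
  have : NoMinOrder ↥sᶜ := hs.compl.noMinOrder
  have : NoMaxOrder ↥sᶜ := ⟨fun x => let ⟨y, hy, hxy⟩ := hsmax x x.2; ⟨⟨y, hy⟩, hxy⟩⟩
  have : Nonempty ↥sᶜ := hne.to_subtype
  have : Nonempty {b : s // b ≠ ⟨a, ha⟩} :=
    let ⟨b, hb⟩ := exists_gt (⟨a, ha⟩ : s); ⟨⟨b, hb.ne'⟩⟩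
  have : s.OrdConnected := hs.ordConnected
  have : sᶜ.OrdConnected := hs.compl.ordConnected
  exact ⟨_, inferInstance, inferInstance, inferInstance, inferInstance, s.moveToBot ⟨a, ha⟩,
    Set.strictMonoOn_moveToBot _, fun _ hx _ hy => Set.moveToBot_lt_of_notMem_of_mem _ hx hy,
    Set.isLeast_moveToBot_image _⟩

theorem exists_equiv_dlo_isLeast_strictUpperBounds {c : ℕ → α} (hc : StrictMono c)
    (hne : ∃ a, ∀ n, c n < a) (hno : ¬ ∃ a, IsLeast {x | ∀ n, c n < x} a) :
    ∃ (β : Type u) (_ : LinearOrder β) (_ : DenselyOrdered β) (_ : NoMinOrder β)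
      (_ : NoMaxOrder β) (e : α ≃ β), StrictMono (e ∘ c) ∧
      ∃ b, IsLeast {y | ∀ n, e (c n) < y} b := by
  set s := {x | ∀ n, c n < x}
  have hs : IsUpperSet s := fun x y hxy hx n => (hx n).trans_le hxy
  have hcs : ∀ n, c n ∉ s := fun n h => lt_irrefl _ (h n)
  have hsmin : ∀ x ∈ s, ∃ y ∈ s, y < x := by
    intro x hx
    by_contra! h
    exact hno ⟨x, hx, h⟩
  have hsmax : ∀ x ∉ s, ∃ y ∉ s, x < y := by
    intro x hx
    obtain ⟨n, hxn⟩ : ∃ n, x ≤ c n := by simpa [s] using hx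
    exact ⟨c (n + 1), hcs _, hxn.trans_lt (hc n.lt_succ_self)⟩
  obtain ⟨a, ha⟩ := hne
  obtain ⟨β, _, _, _, _, e, hmono, hsep, hleast⟩ :=
    hs.exists_equiv_dlo_isLeast_image hsmin hsmax ⟨c 0, hcs 0⟩ ha
  refine ⟨β, _, ‹_›, ‹_›, ‹_›, e, fun m n hmn => hmono (hcs m) (hcs n) (hc hmn), e a,
    fun n => hsep _ (hcs n) _ ha, fun y hy => ?_⟩
  obtain ⟨x, rfl⟩ := e.surjective y
  by_cases hx : x ∈ s
  · exact hleast.2 ⟨x, hx, rfl⟩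
  · exact absurd (fun n => (hmono.lt_iff_lt (hcs n) hx).1 (hy n)) hx

end Order

section Model
variable {X : Type*}

abbrev structureOfOrder [LE X] (c : ℕ → X) : EL.Structure X :=
  @Language.sumStructure _ _ X (orderStructure X) (constantsOn.structure c)

theorem model_T1_structureOfOrder [LinearOrder X] [DenselyOrdered X] [NoMinOrder X]
    [NoMaxOrder X] {c : ℕ → X} (hc : StrictMono c) :
    @Theory.Model EL X (structureOfOrder c) T1 := by
  let : Language.order.Structure X := orderStructure X
  let : (constantsOn ℕ).Structure X := constantsOn.structure c
  have : Language.order.OrderedStructure X := ⟨fun _ => Iff.rfl⟩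
  let : EL.Structure X := structureOfOrder c
  have : EL.OrderedStructure X := ⟨fun _ => Iff.rfl⟩
  refine Theory.model_union_iff.2
    ⟨(@LHom.onTheory_model _ _ _ _ _ _ (LHom.sumInl_isExpansionOn X) _).2 inferInstance, ?_⟩
  refine (Theory.model_iff _).2 ?_
  rintro _ ⟨n, rfl⟩
  simp only [Sentence.Realize, Formula.Realize, cT, Term.realize_lt, Term.realize_constants]
  exact hc n.lt_succ_self

theorem exists_dlo_of_model_T1 (S : EL.Structure X) (hS : @Theory.Model EL X S T1) :
    ∃ _ : LinearOrder X, (∀ a b, a ≤ b ↔ Ele S a b) ∧ DenselyOrdered X ∧ NoMinOrder X ∧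
      NoMaxOrder X ∧ StrictMono (Econ S) := by
  classical
  let : Language.order.Structure X := @LHom.reduct Language.order EL LHom.sumInl X S
  have : X ⊨ Language.order.dlo :=
    (@LHom.onTheory_model Language.order EL X _ S LHom.sumInl
      (LHom.isExpansionOn_reduct _ X) _).1 (hS.mono Set.subset_union_left)
  let o : LinearOrder X := Language.order.linearOrderOfModels X
  have : EL.OrderedStructure X := ⟨fun x => by
    rw [show x = ![x 0, x 1] from funext fun i => by fin_cases i <;> rfl]; rfl⟩
  refine ⟨o, fun _ _ => Iff.rfl, Language.order.denselyOrdered_of_dlo X,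
    @NoBotOrder.to_noMinOrder X o (Language.order.noBotOrder_of_dlo X),
    @NoTopOrder.to_noMaxOrder X o (Language.order.noTopOrder_of_dlo X),
    strictMono_nat_of_lt_succ fun n => ?_⟩
  have := T1.realize_sentence_of_mem (M := X) (Set.mem_union_right _ ⟨n, rfl⟩)
  simp only [Sentence.Realize, Formula.Realize, cT, Term.realize_lt, Term.realize_constants]
    at this
  have hcon : ∀ m, ((Language.order.con m : EL.Constants) : X) = Econ S m := fun m =>
    congrArg (Structure.funMap (L := EL) (Language.order.con m)) (Subsingleton.elim _ _)
  rwa [hcon, hcon] at this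

def HasLeastRealization (S : EL.Structure X) : Prop :=
  ∃ a : X, RealizesP S a ∧ ∀ b : X, RealizesP S b → Ele S a b

theorem realizesP_iff_forall_lt [LinearOrder X] (S : EL.Structure X)
    (hle : ∀ a b, a ≤ b ↔ Ele S a b) {a : X} : RealizesP S a ↔ ∀ n, Econ S n < a := by
  simp only [RealizesP, Elt, ← hle, lt_iff_le_and_ne]

theorem hasLeastRealization_iff_exists_isLeast [LinearOrder X] (S : EL.Structure X)
    (hle : ∀ a b, a ≤ b ↔ Ele S a b) :
    HasLeastRealization S ↔ ∃ a, IsLeast {x | ∀ n, Econ S n < x} a := by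
  simp only [HasLeastRealization, realizesP_iff_forall_lt S hle, ← hle, IsLeast, lowerBounds,
    Set.mem_ofPred_eq]

end Model

section Transfer
variable {M N : Type*} [SM : EL.Structure M] [SN : EL.Structure N] (f : M ≃[EL] N)

theorem FirstOrder.Language.Equiv.ele_iff {a b : M} : Ele SN (f a) (f b) ↔ Ele SM a b := by
  rw [Ele, Ele, show ![f a, f b] = f ∘ ![a, b] from FinVec.map_eq (⇑f) ![a, b] ]
  exact f.map_rel _ _

theorem FirstOrder.Language.Equiv.econ_eq (n : ℕ) : Econ SN n = f (Econ SM n) := by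
  rw [Econ, Econ, f.map_fun]
  exact congrArg _ (Subsingleton.elim _ _)

theorem FirstOrder.Language.Equiv.realizesP_iff {a : M} :
    RealizesP SN (f a) ↔ RealizesP SM a := by
  simp only [RealizesP, Elt, f.econ_eq, f.ele_iff, f.injective.ne_iff]

theorem HasLeastRealization.map_equiv (f : M ≃[EL] N) (h : HasLeastRealization SM) :
    HasLeastRealization SN := by
  obtain ⟨a, ha, hleast⟩ := h
  refine ⟨f a, f.realizesP_iff.2 ha, fun b hb => ?_⟩
  rw [← f.apply_symm_apply b, f.realizesP_iff] at hb
  rw [← f.apply_symm_apply b, f.ele_iff]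
  exact hleast _ hb

end Transfer

/-- (ZF) If `T₁` has a model with universe `X` in which `p(x) = {c_n < x : n < ω}` is
realized but has no `<`-least realization, then `T₁` has a model with universe `X` with a
`<`-least realization of `p(x)`. -/
theorem exists_model_with_least_realization (X : Type*)
    (h : ∃ S : EL.Structure X, @Theory.Model EL X S T1 ∧
      (∃ a : X, RealizesP S a) ∧
      ¬ ∃ a : X, RealizesP S a ∧ ∀ b : X, RealizesP S b → Ele S a b) :
    ∃ S : EL.Structure X, @Theory.Model EL X S T1 ∧
      ∃ a : X, RealizesP S a ∧ ∀ b : X, RealizesP S b → Ele S a b := by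
  obtain ⟨S, hS, ⟨a, ha⟩, hno⟩ := h
  obtain ⟨_, hle, _, _, _, hc⟩ := exists_dlo_of_model_T1 S hS
  obtain ⟨β, _, _, _, _, e, he, hleast⟩ := exists_equiv_dlo_isLeast_strictUpperBounds hc
    ⟨a, (realizesP_iff_forall_lt S hle).1 ha⟩
    ((hasLeastRealization_iff_exists_isLeast S hle).not.1 hno)
  let T : EL.Structure β := structureOfOrder (e ∘ Econ S)
  have hT : @Theory.Model EL β T T1 := model_T1_structureOfOrder he
  refine ⟨e.symm.inducedStructure,
    @StrongHomClass.theory_model EL β X T e.symm.inducedStructure T1 _ _ _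
      e.symm.inducedStructureEquiv hT,
    @HasLeastRealization.map_equiv β X T e.symm.inducedStructure
      e.symm.inducedStructureEquiv ?_⟩
  exact (hasLeastRealization_iff_exists_isLeast T fun _ _ => Iff.rfl).2 hleast
end

section
/- In ZF: let T₁ be the theory of dense linear orders without endpoints with constants c_n satisfying c_n < c_{n+1}, and p(x) = {c_n < x : n < ω}. If T₁ has a model with universe X in which some element is the <-least element realizing p(x), then T₁ has a model with universe X that omits p(x) (no element is above all constants). -/
/-!
Let `a` be the least realization of `p`. Every element below `a` lies below some `c_n`, so the
constants are cofinal in `(-∞, a)`. Reorder `X` as `[a, ∞)` reversed followed by `(-∞, a)`: the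
first piece has greatest element `a` and no least element, the second has no least element, so the
new order is again dense without endpoints. The constants keep their order and are cofinal in the
new order, so nothing lies above all of them.
-/

open FirstOrder Language

lemma econ_eq_constantMap {X : Type*} (S : EL.Structure X) (n : ℕ) :
    Econ S n = @Language.constantMap EL X S (Language.order.con n) :=
  congrArg (Structure.funMap (L := EL) (Language.order.con n)) (Subsingleton.elim _ _)

lemma elt_econ_succ {X : Type*} (S : EL.Structure X) (hS : @Theory.Model EL X S T1) (n : ℕ) :
    Elt S (Econ S n) (Econ S (n + 1)) := by
  let := S
  have h := T1.realize_sentence_of_mem (M := X)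
    (Set.mem_union_right _ ⟨n, rfl⟩ : (Term.lt (cT n) (cT (n + 1)) : EL.Sentence) ∈ T1)
  simp only [Sentence.Realize, Formula.Realize, Term.lt, Term.le, cT, BoundedFormula.realize_inf,
    BoundedFormula.realize_rel₂, Term.realize_constants, BoundedFormula.realize_not,
    ← econ_eq_constantMap] at h
  exact ⟨h.1, fun heq => h.2 (heq ▸ h.1)⟩

lemma exists_linearOrder_of_model_T1 {X : Type*} (S : EL.Structure X) (hS : @Theory.Model EL X S T1) :
    ∃ _ : LinearOrder X, DenselyOrdered X ∧ NoMaxOrder X ∧ NoMinOrder X ∧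
      ∀ x y : X, Ele S x y ↔ x ≤ y := by
  let : (Language.order.sum (constantsOn ℕ)).Structure X := S
  let ι : Language.order →ᴸ Language.order.sum (constantsOn ℕ) := LHom.sumInl
  let := ι.reduct X
  have : ι.IsExpansionOn X := LHom.isExpansionOn_reduct ι X
  have : X ⊨ Language.order.dlo :=
    (ι.onTheory_model Language.order.dlo).1 (hS.mono Set.subset_union_left)
  classical
  let := Language.order.linearOrderOfModels X
  have : Language.order.OrderedStructure X := ⟨fun x => by rw [← FinVec.etaExpand_eq x]; rfl⟩
  have := Language.order.noTopOrder_of_dlo X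
  have := Language.order.noBotOrder_of_dlo X
  exact ⟨inferInstance, Language.order.denselyOrdered_of_dlo X, NoTopOrder.to_noMaxOrder X,
    NoBotOrder.to_noMinOrder X, fun _ _ => Iff.rfl⟩

section OrderWithConstants
variable {X : Type*}

abbrev orderStructureWith [LE X] (e : ℕ → X) : EL.Structure X :=
  letI : Language.order.Structure X := orderStructure X
  letI : (constantsOn ℕ).Structure X := constantsOn.structure e
  Language.sumStructure _ _ X

lemma realizesP_orderStructureWith_iff [PartialOrder X] (e : ℕ → X) (b : X) :
    RealizesP (orderStructureWith e) b ↔ ∀ n, e n < b :=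
  forall_congr' fun _ => lt_iff_le_and_ne.symm

lemma model_T1_orderStructureWith [LinearOrder X] [DenselyOrdered X] [NoMaxOrder X]
    [NoMinOrder X] {e : ℕ → X} (he : StrictMono e) :
    @Theory.Model EL X (orderStructureWith e) T1 := by
  let : Language.order.Structure X := orderStructure X
  let : (constantsOn ℕ).Structure X := constantsOn.structure e
  let S : EL.Structure X := Language.sumStructure Language.order (constantsOn ℕ) X
  show @Theory.Model EL X S T1
  have : Language.order.OrderedStructure X := ⟨fun _ => Iff.rfl⟩
  have : EL.OrderedStructure X := ⟨fun _ => Iff.rfl⟩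
  refine Theory.model_union_iff.2
    ⟨(LHom.onTheory_model LHom.sumInl Language.order.dlo).2 inferInstance, ?_⟩
  rw [Theory.model_iff]
  rintro φ ⟨n, rfl⟩
  simp only [Sentence.Realize, Formula.Realize, cT, Term.realize_lt, Term.realize_constants]
  exact he n.lt_succ_self

end OrderWithConstants

lemma realizesP_equiv_iff {M N : Type*} [SM : EL.Structure M] [SN : EL.Structure N]
    (g : M ≃[EL] N) (x : M) : RealizesP SN (g x) ↔ RealizesP SM x := by
  have hc : ∀ n, g (Econ SM n) = Econ SN n := fun n => by
    rw [econ_eq_constantMap, econ_eq_constantMap, g.map_constants]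
  have hle : ∀ y z, Ele SN (g y) (g z) ↔ Ele SM y z := fun y z => by
    unfold Ele
    convert g.map_rel (Sum.inl leSymb) ![y, z] using 2
    ext i; fin_cases i <;> rfl
  simp only [RealizesP, Elt, ← hc, hle, g.injective.ne_iff]

lemma exists_model_omitting_of_equiv {X Y : Type*} (e : X ≃ Y) (S : EL.Structure Y)
    (hS : @Theory.Model EL Y S T1) (homit : ∀ y, ¬ RealizesP S y) :
    ∃ S : EL.Structure X, @Theory.Model EL X S T1 ∧ ∀ x, ¬ RealizesP S x := by
  let : EL.Structure X := e.symm.inducedStructure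
  let g : Y ≃[EL] X := e.symm.inducedStructureEquiv
  refine ⟨inferInstance, StrongHomClass.theory_model g, fun x hx => homit (e x) ?_⟩
  rw [← realizesP_equiv_iff g]
  simpa only [g, Equiv.toFun_inducedStructureEquiv, Equiv.symm_apply_apply] using hx

lemma noMaxOrder_of_strictMono_of_cofinal {α : Type*} [Preorder α] {e : ℕ → α}
    (he : StrictMono e) (hcof : ∀ y, ∃ n, y ≤ e n) : NoMaxOrder α :=
  ⟨fun y =>
    let ⟨n, hn⟩ := hcof y
    ⟨e (n + 1), hn.trans_lt (he n.lt_succ_self)⟩⟩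

section CutSwap
variable {X : Type*} [LinearOrder X]

abbrev CutSwap (a : X) : Type _ := (Set.Ici a)ᵒᵈ ⊕ₗ Set.Iio a

def equivCutSwap (a : X) : X ≃ CutSwap a :=
  ((Equiv.sumCompl (a ≤ ·)).symm.trans
    (Equiv.sumCongr OrderDual.toDual (Equiv.subtypeEquivRight fun _ => not_le))).trans toLex

lemma exists_model_omitting_cutSwap [DenselyOrdered X] [NoMaxOrder X] [NoMinOrder X]
    {a : X} {e : ℕ → X} (he : StrictMono e) (hbelow : ∀ n, e n < a)
    (hcof : ∀ x < a, ∃ n, x ≤ e n) :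
    ∃ S : EL.Structure (CutSwap a), @Theory.Model EL _ S T1 ∧ ∀ y, ¬ RealizesP S y := by
  let e' : ℕ → CutSwap a := fun n => toLex (Sum.inr ⟨e n, hbelow n⟩)
  have he' : StrictMono e' := fun _ _ h => Sum.Lex.inr_lt_inr_iff.2 (he h)
  have hcof' : ∀ y, ∃ n, y ≤ e' n := by
    rintro (y | ⟨x, hx⟩)
    · exact ⟨0, (Sum.Lex.inl_lt_inr _ _).le⟩
    · exact (hcof x hx).imp fun _ hn => Sum.Lex.inr_le_inr_iff.2 hn
  have := noMaxOrder_of_strictMono_of_cofinal he' hcof'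
  refine ⟨orderStructureWith e', model_T1_orderStructureWith he', fun y hy => ?_⟩
  obtain ⟨n, hn⟩ := hcof' y
  exact not_lt_of_ge hn ((realizesP_orderStructureWith_iff e' y).1 hy n)

end CutSwap

/-- (ZF) If `T₁` has a model with universe `X` in which some element is the `<`-least
realization of `p(x) = {c_n < x : n < ω}`, then `T₁` has a model with universe `X` that
omits `p(x)`. -/
theorem exists_model_omitting_p (X : Type*)
    (h : ∃ S : EL.Structure X, @Theory.Model EL X S T1 ∧
      ∃ a : X, RealizesP S a ∧ ∀ b : X, RealizesP S b → Ele S a b) :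
    ∃ S : EL.Structure X, @Theory.Model EL X S T1 ∧ ∀ a : X, ¬ RealizesP S a := by
  obtain ⟨S, hS, a, ha, hleast⟩ := h
  obtain ⟨_, _, _, _, hle⟩ := exists_linearOrder_of_model_T1 S hS
  have hlt : ∀ x y, Elt S x y ↔ x < y := fun x y => by rw [Elt, hle, lt_iff_le_and_ne]
  have hmono : StrictMono (Econ S) :=
    strictMono_nat_of_lt_succ fun n => (hlt _ _).1 (elt_econ_succ S hS n)
  have hbelow : ∀ n, Econ S n < a := fun n => (hlt _ _).1 (ha n)
  have hcof : ∀ x < a, ∃ n, x ≤ Econ S n := by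
    intro x hx
    by_contra! hx_realizes
    exact not_lt_of_ge ((hle a x).1 (hleast x fun n => (hlt _ _).2 (hx_realizes n))) hx
  obtain ⟨S', hS', homit⟩ := exists_model_omitting_cutSwap hmono hbelow hcof
  exact exists_model_omitting_of_equiv (equivCutSwap a) S' hS' homit
end

section
/- In ZF: if the Ehrenfeucht theory T₁ has a model whose universe X is uncountable (not equinumerous with ω), then T₁ has at least ℵ₀ pairwise non-isomorphic models with universe X. -/
open FirstOrder Language

/-! `X` is infinite, since the order reduct of a model of `T₁` is a dense linear order without
endpoints, so after well-ordering `X` there is a bijection `X ≃ ℚ ⊕ₗ (X ×ₗ ℚ) ⊕ₗ ℚ`. For each `n`,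
putting `c_0 < ⋯ < c_n` in the left copy of `ℚ` and the remaining constants in the right one
gives a model of `T₁` in which `(c_n, c_{n+1})` is the only uncountable interval between
consecutive constants. An isomorphism of such models is an order isomorphism fixing every `c_k`,
so it preserves the countability of each interval `(c_k, c_{k+1})`. -/

open Set

section InducedStructure

variable {L : Language} {M N P Q : Type*}

theorem model_inducedStructure (S : L.Structure M) (e : M ≃ N) {T : L.Theory}
    (h : @Theory.Model L M S T) : @Theory.Model L N (@Equiv.inducedStructure L M N S e) T :=
  letI := Equiv.inducedStructure (L := L) e
  StrongHomClass.theory_model (Equiv.inducedStructureEquiv e)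

def equivOfInducedStructure (S : L.Structure M) (S' : L.Structure N) (e : M ≃ P) (e' : N ≃ Q)
    (g : @Language.Equiv L P Q (@Equiv.inducedStructure L M P S e)
      (@Equiv.inducedStructure L N Q S' e')) : @Language.Equiv L M N S S' :=
  letI := Equiv.inducedStructure (L := L) e
  letI := Equiv.inducedStructure (L := L) e'
  (Equiv.inducedStructureEquiv e').symm.comp (g.comp (Equiv.inducedStructureEquiv e))

end InducedStructure

theorem infinite_of_model_T1 {X : Type*} (S : EL.Structure X) (h : @Theory.Model EL X S T1) :
    Infinite X := by
  let : (Language.order.sum (constantsOn ℕ)).Structure X := S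
  let : Language.order.Structure X := (LHom.sumInl : Language.order →ᴸ EL).reduct X
  have : X ⊨ Language.order.dlo :=
    (@LHom.onTheory_model _ _ X _ S LHom.sumInl (LHom.isExpansionOn_reduct _ X) _).1
      (h.mono subset_union_left)
  have : Nonempty X := ⟨Econ S 0⟩
  infer_instance

section OrderWithConstants

variable {V W : Type*} {c : ℕ → V} {d : ℕ → W}

abbrev elStructure [LE V] (c : ℕ → V) : EL.Structure V :=
  @Language.withConstantsStructure Language.order V (orderStructure V) ℕ (constantsOn.structure c)

theorem elStructure_model_T1 [LinearOrder V] [DenselyOrdered V] [NoMaxOrder V] [NoMinOrder V]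
    (hc : StrictMono c) : @Theory.Model EL V (elStructure c) T1 := by
  let := orderStructure V
  let := constantsOn.structure c
  let : EL.Structure V := elStructure c
  have : Language.order.OrderedStructure V := ⟨fun _ => Iff.rfl⟩
  have : EL.OrderedStructure V := ⟨fun _ => Iff.rfl⟩
  have hexp : (LHom.sumInl : Language.order →ᴸ EL).IsExpansionOn V :=
    ⟨fun _ _ => rfl, fun _ _ => rfl⟩
  refine Theory.model_union_iff.2
    ⟨(@LHom.onTheory_model _ _ V _ _ _ hexp _).2 inferInstance, Theory.model_iff _ |>.2 ?_⟩
  rintro φ ⟨n, rfl⟩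
  exact (Term.realize_lt (L := EL)).2 (hc n.lt_succ_self)

def orderIsoOfEquiv [LE V] [LE W] (f : @Language.Equiv EL V W (elStructure c) (elStructure d)) :
    V ≃o W where
  toEquiv := @Language.Equiv.toEquiv EL V W (elStructure c) (elStructure d) f
  map_rel_iff' {a b} :=
    @Language.Equiv.map_rel EL V W (elStructure c) (elStructure d) f 2 leSymb ![a, b]

theorem orderIsoOfEquiv_apply_const [LE V] [LE W]
    (f : @Language.Equiv EL V W (elStructure c) (elStructure d)) (k : ℕ) :
    orderIsoOfEquiv f (c k) = d k :=
  @Language.Equiv.map_fun EL V W (elStructure c) (elStructure d) f 0 (Language.order.con k) ![]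

theorem countable_Ioo_of_equiv [Preorder V] [Preorder W]
    (f : @Language.Equiv EL V W (elStructure c) (elStructure d)) {k : ℕ}
    (h : (Ioo (d k) (d (k + 1))).Countable) : (Ioo (c k) (c (k + 1))).Countable := by
  have := h.preimage (orderIsoOfEquiv f).injective
  rwa [← orderIsoOfEquiv_apply_const f, ← orderIsoOfEquiv_apply_const f, OrderIso.preimage_Ioo,
    OrderIso.symm_apply_apply, OrderIso.symm_apply_apply] at this

end OrderWithConstants

abbrev Carrier (X : Type*) : Type _ := ℚ ⊕ₗ ((X ×ₗ ℚ) ⊕ₗ ℚ)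

section Carrier

variable (X : Type*)

theorem mk_carrier [Infinite X] : Cardinal.mk (Carrier X) = Cardinal.mk X := by
  have hX : Cardinal.aleph0 ≤ Cardinal.mk X := Cardinal.infinite_iff.1 inferInstance
  have e : Carrier X ≃ ℚ ⊕ ((X × ℚ) ⊕ ℚ) :=
    ofLex.trans (.sumCongr (.refl ℚ) (ofLex.trans (.sumCongr ofLex (.refl ℚ))))
  simp [Cardinal.mk_congr e, Cardinal.add_eq_left hX, Cardinal.add_eq_right hX]

/-- Only the interval `(c_n, c_{n+1})` meets the middle summand `X ×ₗ ℚ`. -/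
def carrierConst (n k : ℕ) : Carrier X :=
  if k ≤ n then toLex (Sum.inl k) else toLex (Sum.inr (toLex (Sum.inr k)))

variable [LinearOrder X]

theorem strictMono_carrierConst (n : ℕ) : StrictMono (carrierConst X n) := by
  refine strictMono_nat_of_lt_succ fun k => ?_
  unfold carrierConst
  by_cases hsucc : k + 1 ≤ n
  · rw [if_pos (by omega), if_pos hsucc]
    exact Sum.Lex.inl_lt_inl_iff.2 (by exact_mod_cast k.lt_succ_self)
  · rw [if_neg hsucc]
    by_cases hk : k ≤ n
    · rw [if_pos hk]
      exact Sum.Lex.inl_lt_inr _ _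
    · rw [if_neg hk]
      exact Sum.Lex.inr_lt_inr_iff.2 (Sum.Lex.inr_lt_inr_iff.2 (by exact_mod_cast k.lt_succ_self))

theorem not_countable_Ioo_carrierConst [Uncountable X] (n : ℕ) :
    ¬ (Ioo (carrierConst X n n) (carrierConst X n (n + 1))).Countable := by
  let emb : X → Carrier X := fun x => toLex (Sum.inr (toLex (Sum.inl (toLex (x, 0)))))
  have hemb : Function.Injective emb := fun a b hab => by simpa [emb] using hab
  have hmem : univ ⊆ emb ⁻¹' Ioo (carrierConst X n n) (carrierConst X n (n + 1)) := by
    intro x _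
    simp only [carrierConst, le_refl, if_pos, show ¬ n + 1 ≤ n by omega, if_false]
    exact ⟨Sum.Lex.inl_lt_inr _ _, Sum.Lex.inr_lt_inr_iff.2 (Sum.Lex.inl_lt_inr _ _)⟩
  exact fun hc => not_countable_univ ((hc.preimage hemb).mono hmem)

theorem countable_Ioo_carrierConst {m n : ℕ} (hmn : m ≠ n) :
    (Ioo (carrierConst X n m) (carrierConst X n (m + 1))).Countable := by
  rcases hmn.lt_or_gt with hlt | hgt
  · refine (countable_range fun q : ℚ => (toLex (Sum.inl q) : Carrier X)).mono ?_
    rintro v ⟨-, hv⟩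
    obtain ⟨q | w, rfl⟩ := toLex.surjective v
    · exact ⟨q, rfl⟩
    · rw [carrierConst, if_pos (by omega : m + 1 ≤ n)] at hv
      exact absurd hv Sum.Lex.not_inr_lt_inl
  · refine (countable_range fun q : ℚ =>
      (toLex (Sum.inr (toLex (Sum.inr q))) : Carrier X)).mono ?_
    rintro v ⟨hv, -⟩
    rw [carrierConst, if_neg (by omega : ¬ m ≤ n)] at hv
    obtain ⟨q | w, rfl⟩ := toLex.surjective v
    · exact absurd hv Sum.Lex.not_inr_lt_inl
    · obtain ⟨x | q, rfl⟩ := toLex.surjective w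
      · exact absurd (Sum.Lex.inr_lt_inr_iff.1 hv) Sum.Lex.not_inr_lt_inl
      · exact ⟨q, rfl⟩

end Carrier

/-- (ZF) If the Ehrenfeucht theory `T₁` has a model whose universe `X` is uncountable
(not equinumerous with `ω`), then `T₁` has at least `ℵ₀` pairwise non-isomorphic models
with universe `X`. -/
theorem countably_many_nonisomorphic_models (X : Type*)
    (hX : ¬ Nonempty (X ≃ ℕ))
    (h : ∃ S : EL.Structure X, @Theory.Model EL X S T1) :
    ∃ S : ℕ → EL.Structure X,
      (∀ n : ℕ, @Theory.Model EL X (S n) T1) ∧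
      ∀ m n : ℕ, m ≠ n → ¬ Nonempty (@Language.Equiv EL X X (S m) (S n)) := by
  obtain ⟨S₀, hS₀⟩ := h
  have : Infinite X := infinite_of_model_T1 S₀ hS₀
  have : Uncountable X := ⟨fun _ => hX nonempty_equiv_of_countable⟩
  let : LinearOrder X := IsWellOrder.linearOrder WellOrderingRel
  obtain ⟨e⟩ := Cardinal.eq.1 (mk_carrier X)
  let M (n : ℕ) := elStructure (carrierConst X n)
  refine ⟨fun n => @Equiv.inducedStructure EL _ _ (M n) e, fun n => ?_, fun m n hmn ⟨g⟩ => ?_⟩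
  · exact model_inducedStructure (M n) e (elStructure_model_T1 (strictMono_carrierConst X n))
  · exact not_countable_Ioo_carrierConst X m <|
      countable_Ioo_of_equiv (equivOfInducedStructure (M m) (M n) e e g)
        (countable_Ioo_carrierConst X hmn)
end

section
/- In ZF: if a first-order theory T in a countable vocabulary is categorical in the power of some infinite set X of reasonable power (linearly orderable with |X × X| = |X|), then T together with the axioms ∃^{≥n} x (x = x) for all n < ω is a complete theory. -/
open FirstOrder Language

private lemma model_induced_aux {L : Language} {M X : Type*} [L.Structure M] (e : M ≃ X)
    {T : L.Theory} (h : M ⊨ T) : @Theory.Model L X (Equiv.inducedStructure e) T := by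
  letI := @Equiv.inducedStructure L M X _ e
  haveI := h
  exact StrongHomClass.theory_model (Equiv.inducedStructureEquiv e)

private lemma equiv_transfer_aux {L : Language} {M N X : Type*} [L.Structure M] [L.Structure N]
    (eM : M ≃ X) (eN : N ≃ X)
    (f : @Language.Equiv L X X (Equiv.inducedStructure eM) (Equiv.inducedStructure eN)) :
    Nonempty (M ≃[L] N) := by
  letI SM := @Equiv.inducedStructure L M X _ eM
  letI SN := @Equiv.inducedStructure L N X _ eN
  have gM : @Language.Equiv L M X _ SM := Equiv.inducedStructureEquiv eM
  have gN : @Language.Equiv L N X _ SN := Equiv.inducedStructureEquiv eN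
  exact ⟨@Language.Equiv.comp L M X _ SM N _
    (@Language.Equiv.comp L X X SM SN N _ (@Language.Equiv.symm L N X _ SN gN) f) gM⟩

/-- (ZF) If a first-order theory `T` in a countable vocabulary is categorical in the
power of an infinite set `X` of reasonable power (i.e. `X` is linearly orderable with
`|X × X| = |X|`), then `T` together with the axioms `∃^{≥n} x (x = x)` (for all `n < ω`)
is a complete theory. -/
theorem complete_of_categorical_in_reasonable_power
    (X : Type*) [LinearOrder X] [Infinite X] (g : X × X ≃ X)
    (L : FirstOrder.Language)
    [Countable (Σ n, L.Functions n)] [Countable (Σ n, L.Relations n)]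
    (T : L.Theory)
    (hmodel : ∃ S : L.Structure X, @Theory.Model L X S T)
    (hcat : ∀ S₁ S₂ : L.Structure X, @Theory.Model L X S₁ T → @Theory.Model L X S₂ T →
      Nonempty (@Language.Equiv L X X S₁ S₂)) :
    (T ∪ L.infiniteTheory).IsComplete := by
  have hcount : Countable L.Symbols := by
    unfold Language.Symbols
    infer_instance
  have hcard : L.card ≤ Cardinal.aleph0 := Cardinal.mk_le_aleph0
  refine Cardinal.Categorical.isComplete (Cardinal.mk X) (T ∪ L.infiniteTheory) ?_
    (Cardinal.aleph0_le_mk X) ?_ ?_ ?_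
  · rintro M N hM hN
    obtain ⟨eM⟩ := Cardinal.eq.1 hM
    obtain ⟨eN⟩ := Cardinal.eq.1 hN
    have hMT : @Theory.Model L X (Equiv.inducedStructure eM) T :=
      @Theory.Model.mono L X (Equiv.inducedStructure eM) T _
        (model_induced_aux eM M.is_model) Set.subset_union_left
    have hNT : @Theory.Model L X (Equiv.inducedStructure eN) T :=
      @Theory.Model.mono L X (Equiv.inducedStructure eN) T _
        (model_induced_aux eN N.is_model) Set.subset_union_left
    obtain ⟨f⟩ := hcat _ _ hMT hNT
    exact equiv_transfer_aux eM eN f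
  · calc Cardinal.lift.{_} L.card ≤ Cardinal.lift.{_} Cardinal.aleph0 :=
          Cardinal.lift_le.2 hcard
      _ = Cardinal.aleph0 := Cardinal.lift_aleph0
      _ ≤ Cardinal.lift.{_} (Cardinal.mk X) := by
          rw [Cardinal.aleph0_le_lift]; exact Cardinal.aleph0_le_mk X
  · obtain ⟨S, hS⟩ := hmodel
    letI := S
    haveI : X ⊨ T ∪ L.infiniteTheory := by
      rw [Theory.model_union_iff]
      exact ⟨hS, L.model_infiniteTheory_iff.2 inferInstance⟩
    exact Theory.Model.isSatisfiable X
  · intro M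
    have := Theory.Model.mono M.is_model (Set.subset_union_right (s := T))
    exact L.model_infiniteTheory_iff.1 this
end
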